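/- Let 0 < b < a < 1 and α ∈ (0,1), and let w' be the graphon equal to b on [0,α]² and equal to a elsewhere. Then the degeneracy of w' is (1−α)a + αb. If instead b ≥ a, the degeneracy of w' is max{a, αb}. -/

import Mathlib

open MeasureTheory Set Filter

/-- A graphon: symmetric measurable `w : [0,1]² → [0,1]` (stated on all of ℝ²). -/
def Graphon (w : ℝ → ℝ → ℝ) : Prop :=
  Measurable (Function.uncurry w) ∧ (∀ x y, w x y = w y x) ∧
    ∀ x y, w x y ∈ Set.Icc (0 : ℝ) 1

/-- Degree of `x` restricted to `K`: `d_w^K(x) = ∫_K w(x,y) dy`. -/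
noncomputable def degK (w : ℝ → ℝ → ℝ) (K : Set ℝ) (x : ℝ) : ℝ := ∫ y in K, w x y

/-- Iterated peeling sets: `coreIter w κ n = K^{n+1}_κ(w)` (so index 0 is `K¹`). -/
noncomputable def coreIter (w : ℝ → ℝ → ℝ) (κ : ℝ) : ℕ → Set ℝ
  | 0 => {x ∈ Set.Icc (0 : ℝ) 1 | κ ≤ degK w (Set.Icc 0 1) x}
  | n + 1 => {x ∈ coreIter w κ n | κ ≤ degK w (coreIter w κ n) x}

/-- The κ-core `K_κ(w) = ⋂ₙ K^n_κ(w)`. -/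
noncomputable def core (w : ℝ → ℝ → ℝ) (κ : ℝ) : Set ℝ := ⋂ n, coreIter w κ n

/-- Shell index `δ_x(w) = sup {κ : x ∈ K_κ(w)}`. -/
noncomputable def shell (w : ℝ → ℝ → ℝ) (x : ℝ) : ℝ := sSup {κ | x ∈ core w κ}

/-- Degeneracy `δ(w) = sup {κ : |K_κ(w)| > 0}`. -/
noncomputable def degen (w : ℝ → ℝ → ℝ) : ℝ := sSup {κ | 0 < volume (core w κ)}

/-- Cut-norm distance `d_□`. -/
noncomputable def cutDist (w w' : ℝ → ℝ → ℝ) : ℝ :=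
  sSup {r | ∃ S T : Set ℝ, MeasurableSet S ∧ MeasurableSet T ∧
    S ⊆ Set.Icc 0 1 ∧ T ⊆ Set.Icc 0 1 ∧
    r = |∫ x in S, ∫ y in T, (w x y - w' x y)|}

/-- A measure-preserving map of `[0,1]`. -/
def MPMap (σ : ℝ → ℝ) : Prop :=
  Measurable σ ∧ Set.MapsTo σ (Set.Icc 0 1) (Set.Icc 0 1) ∧
    ∀ A : Set ℝ, MeasurableSet A → A ⊆ Set.Icc 0 1 →
      volume (σ ⁻¹' A ∩ Set.Icc 0 1) = volume A

/-- Cut metric `δ_□(w,w') = inf_σ d_□(w^σ, w')`. -/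
noncomputable def cutMetric (w w' : ℝ → ℝ → ℝ) : ℝ :=
  sInf {r | ∃ σ : ℝ → ℝ, MPMap σ ∧ r = cutDist (fun x y => w (σ x) (σ y)) w'}

section Aux

variable (a b α : ℝ)

lemma w_meas (x : ℝ) : Measurable fun y : ℝ => if x ≤ α ∧ y ≤ α then b else a := by
  by_cases hx : x ≤ α
  · simp only [hx, true_and]
    exact Measurable.ite measurableSet_Iic measurable_const measurable_const
  · simp [hx]

lemma w_int (x : ℝ) {K : Set ℝ} (hK : K ⊆ Icc 0 1) :
    IntegrableOn (fun y => if x ≤ α ∧ y ≤ α then b else a) K := by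
  refine IntegrableOn.mono_set ?_ hK
  refine Integrable.mono' (g := fun _ => max |b| |a|)
    (integrableOn_const (hs := measure_Icc_lt_top.ne) (hC := enorm_ne_top))
    ((w_meas a b α x).aestronglyMeasurable) ?_
  filter_upwards with y
  by_cases h : x ≤ α ∧ y ≤ α
  · simp only [h, if_true, Real.norm_eq_abs]; exact le_max_left _ _
  · simp only [h, if_false, Real.norm_eq_abs]; exact le_max_right _ _

lemma deg_gt {x : ℝ} (hx : ¬ x ≤ α) (K : Set ℝ) :
    degK (fun x y => if x ≤ α ∧ y ≤ α then b else a) K x = (volume K).toReal * a := by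
  unfold degK
  simp only [hx, false_and, if_false]
  rw [setIntegral_const, smul_eq_mul, measureReal_def]

lemma deg_alpha (h0 : 0 ≤ α) {x : ℝ} (hx : x ≤ α) :
    degK (fun x y => if x ≤ α ∧ y ≤ α then b else a) (Icc 0 α) x = α * b := by
  unfold degK
  rw [setIntegral_congr_fun (g := fun _ => b) measurableSet_Icc
    (fun y hy => by simp [hx, hy.2])]
  rw [setIntegral_const, smul_eq_mul, measureReal_def, Real.volume_Icc]
  simp [ENNReal.toReal_ofReal h0]

lemma deg_full (h0 : 0 ≤ α) (h1 : α ≤ 1) {x : ℝ} (hx : x ≤ α) :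
    degK (fun x y => if x ≤ α ∧ y ≤ α then b else a) (Icc 0 1) x = α * b + (1 - α) * a := by
  unfold degK
  have hsplit : (Icc (0:ℝ) 1) = Icc 0 α ∪ Ioc α 1 := (Icc_union_Ioc_eq_Icc h0 h1).symm
  have hdisj : Disjoint (Icc (0:ℝ) α) (Ioc α 1) :=
    disjoint_left.mpr fun y hy1 hy2 => absurd hy1.2 (not_le.2 hy2.1)
  rw [hsplit, setIntegral_union hdisj measurableSet_Ioc
    (w_int a b α x (Icc_subset_Icc le_rfl h1))
    (w_int a b α x (Ioc_subset_Icc_self.trans (Icc_subset_Icc h0 le_rfl)))]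
  have e1 : ∫ y in Icc (0:ℝ) α, (if x ≤ α ∧ y ≤ α then b else a) = α * b := by
    rw [setIntegral_congr_fun (g := fun _ => b) measurableSet_Icc
      (fun y hy => by simp [hx, hy.2]), setIntegral_const, smul_eq_mul, measureReal_def, Real.volume_Icc]
    simp [ENNReal.toReal_ofReal h0]
  have e2 : ∫ y in Ioc α (1:ℝ), (if x ≤ α ∧ y ≤ α then b else a) = (1 - α) * a := by
    rw [setIntegral_congr_fun (g := fun _ => a) measurableSet_Ioc
      (fun y hy => by simp [not_le.2 hy.1]), setIntegral_const, smul_eq_mul, measureReal_def, Real.volume_Ioc]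
    rw [ENNReal.toReal_ofReal (by linarith)]
  rw [e1, e2]

lemma deg_mono (ha : 0 < a) (hb : 0 < b) (x : ℝ) {S T : Set ℝ} (hST : S ⊆ T)
    (hT : T ⊆ Icc 0 1) :
    degK (fun x y => if x ≤ α ∧ y ≤ α then b else a) S x ≤
      degK (fun x y => if x ≤ α ∧ y ≤ α then b else a) T x := by
  refine setIntegral_mono_set (w_int a b α x hT) ?_ (HasSubset.Subset.eventuallyLE hST)
  filter_upwards with y
  by_cases h : x ≤ α ∧ y ≤ α <;> simp [h, ha.le, hb.le]

lemma coreIter_subset (w : ℝ → ℝ → ℝ) (κ : ℝ) : ∀ n, coreIter w κ n ⊆ Icc 0 1 := by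
  intro n
  induction n with
  | zero => exact sep_subset _ _
  | succ n ih => exact (sep_subset _ _).trans ih

/-- When `κ ≤ a` and `κ ≤ αb + (1-α)a`, the core is all of `[0,1]`. -/
lemma core_full (ha : 0 < a) (hα0 : 0 < α) (hα1 : α < 1) {κ : ℝ}
    (hκa : κ ≤ a) (hκ0 : κ ≤ α * b + (1 - α) * a) :
    core (fun x y => if x ≤ α ∧ y ≤ α then b else a) κ = Icc 0 1 := by
  have hstep : {x ∈ Icc (0:ℝ) 1 |
      κ ≤ degK (fun x y => if x ≤ α ∧ y ≤ α then b else a) (Icc 0 1) x} = Icc 0 1 := by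
    ext x
    simp only [mem_sep_iff, and_iff_left_iff_imp]
    intro hx
    by_cases hxα : x ≤ α
    · rw [deg_full a b α hα0.le hα1.le hxα]; exact hκ0
    · rw [deg_gt a b α hxα, Real.volume_Icc]
      simpa using hκa
  have hiter : ∀ n, coreIter (fun x y => if x ≤ α ∧ y ≤ α then b else a) κ n = Icc 0 1 := by
    intro n
    induction n with
    | zero => exact hstep
    | succ n ih => show {x ∈ _ | _} = _; rw [ih]; exact hstep
  unfold core
  simp only [hiter, iInter_const]

theorem stmt19' (ha : a ∈ Set.Ioo (0 : ℝ) 1) (hb : b ∈ Set.Ioo (0 : ℝ) 1)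
    (hα : α ∈ Set.Ioo (0 : ℝ) 1) :
    (b < a →
      degen (fun x y => if x ≤ α ∧ y ≤ α then b else a) = (1 - α) * a + α * b) ∧
    (a ≤ b →
      degen (fun x y => if x ≤ α ∧ y ≤ α then b else a) = max a (α * b)) := by
  obtain ⟨ha0, ha1⟩ := ha
  obtain ⟨hb0, hb1⟩ := hb
  obtain ⟨hα0, hα1⟩ := hα
  set w : ℝ → ℝ → ℝ := fun x y => if x ≤ α ∧ y ≤ α then b else a with hw
  constructor
  · -- b < a
    intro hba
    have hset : {κ | 0 < volume (core w κ)} = Iic ((1 - α) * a + α * b) := by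
      ext κ
      simp only [mem_setOf_eq, mem_Iic]
      constructor
      · intro h
        by_contra hlt
        push_neg at hlt
        -- show core is empty
        have h0 : coreIter w κ 0 ⊆ Ioc α 1 := by
          intro x hx
          obtain ⟨hx1, hx2⟩ := hx
          by_cases hxα : x ≤ α
          · rw [hw, deg_full a b α hα0.le hα1.le hxα] at hx2
            linarith
          · exact ⟨not_le.1 hxα, hx1.2⟩
        have h1 : coreIter w κ 1 = ∅ := by
          ext x
          simp only [mem_empty_iff_false, iff_false]
          rintro ⟨hx0, hx2⟩
          have hxα : ¬ x ≤ α := not_le.2 (h0 hx0).1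
          rw [hw, deg_gt a b α hxα] at hx2
          have hvle : (volume (coreIter w κ 0)).toReal ≤ 1 - α := by
            have hm := measure_mono (μ := volume) h0
            rw [Real.volume_Ioc] at hm
            calc (volume (coreIter w κ 0)).toReal
                ≤ (ENNReal.ofReal (1 - α)).toReal := ENNReal.toReal_mono ENNReal.ofReal_ne_top hm
              _ = 1 - α := ENNReal.toReal_ofReal (by linarith)
          have : (volume (coreIter w κ 0)).toReal * a ≤ (1 - α) * a :=
            mul_le_mul_of_nonneg_right hvle ha0.le
          nlinarith [mul_pos hα0 hb0]
        have hcore : core w κ = ∅ :=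
          subset_empty_iff.1 (h1 ▸ iInter_subset (fun n => coreIter w κ n) 1)
        rw [hcore] at h
        simp at h
      · intro hκ
        have hcore : core w κ = Icc 0 1 := by
          refine core_full a b α ha0 hα0 hα1 ?_ ?_
          · nlinarith
          · linarith
        rw [hcore, Real.volume_Icc]
        simp
    unfold degen
    rw [hset, csSup_Iic]
  · -- a ≤ b
    intro hab
    have hset : {κ | 0 < volume (core w κ)} = Iic (max a (α * b)) := by
      ext κ
      simp only [mem_setOf_eq, mem_Iic]
      constructor
      · intro h
        by_contra hlt
        push_neg at hlt
        rw [max_lt_iff] at hlt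
        obtain ⟨hlta, hltb⟩ := hlt
        have h0 : coreIter w κ 0 ⊆ Icc 0 α := by
          intro x hx
          obtain ⟨hx1, hx2⟩ := hx
          by_cases hxα : x ≤ α
          · exact ⟨hx1.1, hxα⟩
          · rw [hw, deg_gt a b α hxα, Real.volume_Icc] at hx2
            simp at hx2
            linarith
        have h1 : coreIter w κ 1 = ∅ := by
          ext x
          simp only [mem_empty_iff_false, iff_false]
          rintro ⟨hx0, hx2⟩
          have hxα : x ≤ α := (h0 hx0).2
          have hmono : degK w (coreIter w κ 0) x ≤ degK w (Icc 0 α) x :=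
            deg_mono a b α ha0 hb0 x h0 (Icc_subset_Icc le_rfl hα1.le)
          rw [hw, deg_alpha a b α hα0.le hxα] at hmono
          linarith
        have hcore : core w κ = ∅ :=
          subset_empty_iff.1 (h1 ▸ iInter_subset (fun n => coreIter w κ n) 1)
        rw [hcore] at h
        simp at h
      · intro hκ
        rcases le_max_iff.1 hκ with hκa | hκb
        · have hcore : core w κ = Icc 0 1 := by
            refine core_full a b α ha0 hα0 hα1 hκa ?_
            nlinarith
          rw [hcore, Real.volume_Icc]
          simp
        · -- Icc 0 α ⊆ core
          have hsub : ∀ n, Icc 0 α ⊆ coreIter w κ n := by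
            intro n
            induction n with
            | zero =>
              intro x hx
              refine ⟨⟨hx.1, hx.2.trans hα1.le⟩, ?_⟩
              rw [hw, deg_full a b α hα0.le hα1.le hx.2]
              nlinarith
            | succ n ih =>
              intro x hx
              refine ⟨ih hx, ?_⟩
              have hmono : degK w (Icc 0 α) x ≤ degK w (coreIter w κ n) x :=
                deg_mono a b α ha0 hb0 x ih (coreIter_subset w κ n)
              rw [hw, deg_alpha a b α hα0.le hx.2] at hmono
              linarith
          have hsub' : Icc 0 α ⊆ core w κ := subset_iInter hsub
          have : (0 : ENNReal) < volume (Icc (0:ℝ) α) := by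
            rw [Real.volume_Icc]
            simpa using hα0
          exact this.trans_le (measure_mono hsub')
    unfold degen
    rw [hset, csSup_Iic]
end Aux

theorem stmt19 (a b α : ℝ) (ha : a ∈ Set.Ioo (0 : ℝ) 1) (hb : b ∈ Set.Ioo (0 : ℝ) 1)
    (hα : α ∈ Set.Ioo (0 : ℝ) 1) :
    (b < a →
      degen (fun x y => if x ≤ α ∧ y ≤ α then b else a) = (1 - α) * a + α * b) ∧
    (a ≤ b →
      degen (fun x y => if x ≤ α ∧ y ≤ α then b else a) = max a (α * b)) := by
  exact stmt19' a b α ha hb hα
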